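/- γ-sequence computation in Bailey's transform via Saalschütz: fix a nonnegative integer N and complex f, d₁, d₂. With δ_r = (d₁)_r (d₂)_r (-N)_r / (1+d₁+d₂-f-N)_r, u_r = 1/r!, v_r = 1/(f)_r, the quantity γ_n = Σ_{r=n}^{N} δ_r u_{r-n} v_{r+n} satisfies γ_n = [(f-d₁)_N (f-d₂)_N / ((f)_N (f-d₁-d₂)_N)] · (-1)^n (d₁)_n (d₂)_n (-N)_n / ((f-d₁)_n (f-d₂)_n (f+N)_n) for 0 ≤ n ≤ N. -/
import Mathlib

/-- Pochhammer symbol (rising factorial) for complex numbers. -/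
noncomputable def ph (x : ℂ) (n : ℕ) : ℂ := ∏ i ∈ Finset.range n, (x + i)

lemma ph_zero (x : ℂ) : ph x 0 = 1 := by simp [ph]

lemma ph_succ (x : ℂ) (n : ℕ) : ph x (n+1) = ph x n * (x + n) := by
  simp [ph, Finset.prod_range_succ]

lemma ph_add (x : ℂ) (m n : ℕ) : ph x (m+n) = ph x m * ph (x + m) n := by
  simp only [ph, Finset.prod_range_add]
  congr 1
  refine Finset.prod_congr rfl fun i _ => ?_
  push_cast; ring

lemma ph_succ_left (x : ℂ) (n : ℕ) : ph x (n+1) = x * ph (x+1) n := by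
  have := ph_add x 1 n
  simpa [ph_succ, ph_zero, add_comm 1 n] using this

lemma ph_reflect (x : ℂ) (n : ℕ) : ph x n = (-1)^n * ph (1 - x - n) n := by
  induction n generalizing x with
  | zero => simp [ph_zero]
  | succ n ih =>
    rw [ph_succ, ih, ph_succ_left, show (1:ℂ) - x - (n+1:ℕ) + 1 = 1 - x - n by push_cast; ring,
      ih (1 - x - n)]
    push_cast
    ring_nf

lemma ph_neg_nat (M k : ℕ) (h : k ≤ M) :
    ph (-(M:ℂ)) k = (-1)^k * (M.descFactorial k : ℂ) := by
  induction k with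
  | zero => simp [ph_zero]
  | succ k ih =>
    have hk : k ≤ M := Nat.le_of_succ_le h
    rw [ph_succ, ih hk, Nat.descFactorial_succ]
    have : ((M - k : ℕ) : ℂ) = (M:ℂ) - k := by
      push_cast [Nat.cast_sub hk]; ring
    push_cast [this]
    ring

noncomputable def saalF (a b c : ℂ) (m k : ℕ) : ℂ :=
  (m.choose k : ℂ) * ph a k * ph b k * ph (c + k) (m - k) * ph (c - a - b) (m - k)

noncomputable def saalG (a b c : ℂ) (M k : ℕ) : ℂ :=
  match k with
  | 0 => 0
  | j + 1 => -((M.choose j : ℕ) : ℂ) * ph a (j+1) * ph b (j+1) *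
      ph (c + j) (M - j) * ph (c - a - b) (M - j)

lemma saal_local (a b c : ℂ) (M k : ℕ) (hk : k ≤ M + 1) :
    saalF a b c (M+1) k - ((c - a + M) * (c - b + M)) * saalF a b c M k
      = saalG a b c M (k+1) - saalG a b c M k := by
  match k with
  | 0 =>
    simp only [saalF, saalG, Nat.choose_zero_right, Nat.cast_one, Nat.sub_zero,
      Nat.cast_zero, add_zero, ph_zero]
    rw [ph_succ c M, ph_succ (c-a-b) M, ph_succ a 0, ph_succ b 0]
    simp only [ph_zero]
    push_cast
    ring
  | (j+1) =>
    rcases Nat.lt_or_ge j M with hj | hj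
    · obtain ⟨m, rfl⟩ : ∃ m, M = j + 1 + m := ⟨M - (j+1), by omega⟩
      have e1 : j + 1 + m + 1 - (j+1) = m + 1 := by omega
      have e2 : j + 1 + m - (j+1) = m := by omega
      have e3 : j + 1 + m - j = m + 1 := by omega
      simp only [saalF, saalG, e1, e2, e3]
      have hch : ((j:ℂ)+1) * ((j+1+m).choose (j+1) : ℂ)
          = ((m:ℂ)+1) * ((j+1+m).choose j : ℂ) := by
        have h := Nat.choose_succ_right_eq (j+1+m) j
        rw [e3] at h
        have h' := congrArg (fun t : ℕ => (t : ℂ)) h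
        push_cast at h'
        linear_combination h'
      have hcs : (((j+1+m+1).choose (j+1) : ℕ) : ℂ)
          = ((j+1+m).choose j : ℂ) + ((j+1+m).choose (j+1) : ℂ) := by
        rw [show j+1+m+1 = (j+m+1)+1 by omega, show j+1+m = j+m+1 by omega]
        have h := Nat.choose_succ_succ (j+m+1) j
        simp only [Nat.succ_eq_add_one] at h
        exact_mod_cast congrArg (fun t : ℕ => (t : ℂ)) h
      rw [hcs, ph_succ (c + (j+1:ℕ)) m, ph_succ (c-a-b) m,
        ph_succ a (j+1), ph_succ b (j+1), ph_succ_left (c + (j:ℕ)) m]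
      have hcast : (c + (j:ℕ)) + 1 = c + ((j+1 : ℕ) : ℂ) := by push_cast; ring
      rw [hcast]
      push_cast
      linear_combination (-(c-a-b+(m:ℂ)) * ph a (j+1) * ph b (j+1) *
        ph (c + ((j:ℂ)+1)) m * ph (c-a-b) m) * hch
    · have hjM : j = M := by omega
      subst hjM
      simp only [saalF, saalG, Nat.choose_self, Nat.choose_succ_self, Nat.cast_one,
        Nat.cast_zero, Nat.sub_self, ph_zero, Nat.succ_sub_one]
      ring

lemma saal_poly (M : ℕ) (a b c : ℂ) :
    ∑ k ∈ Finset.range (M+1), saalF a b c M k = ph (c - a) M * ph (c - b) M := by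
  induction M generalizing a b c with
  | zero => simp [saalF, ph_zero]
  | succ M ih =>
    have htel : ∑ k ∈ Finset.range (M+2),
        (saalF a b c (M+1) k - ((c - a + M) * (c - b + M)) * saalF a b c M k)
        = saalG a b c M (M+2) - saalG a b c M 0 := by
      rw [← Finset.sum_range_sub (saalG a b c M) (M+2)]
      exact Finset.sum_congr rfl (fun k hk =>
        saal_local a b c M k (Nat.lt_succ_iff.mp (Finset.mem_range.mp hk)))
    have hG0 : saalG a b c M 0 = 0 := rfl
    have hGtop : saalG a b c M (M+2) = 0 := by
      simp [saalG, Nat.choose_succ_self]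
    rw [hG0, hGtop, sub_zero, Finset.sum_sub_distrib, sub_eq_zero] at htel
    have hlast : saalF a b c M (M+1) = 0 := by
      simp [saalF, Nat.choose_succ_self]
    rw [← Finset.mul_sum, Finset.sum_range_succ (saalF a b c M) (M+1), hlast,
      add_zero, ih] at htel
    rw [show M+1+1 = M+2 by rfl, htel, ph_succ (c-a) M, ph_succ (c-b) M]
    ring

lemma saal_div (M : ℕ) (a b c : ℂ)
    (hc : ∀ k, k ≤ M → ph c k ≠ 0)
    (he : ∀ k, k ≤ M → ph (1+a+b-c-(M:ℂ)) k ≠ 0)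
    (hd : ph (c-a-b) M ≠ 0) :
    ∑ k ∈ Finset.range (M+1),
      ph a k * ph b k * ph (-(M:ℂ)) k /
        (ph c k * ph (1+a+b-c-(M:ℂ)) k * (k.factorial : ℂ))
      = ph (c-a) M * ph (c-b) M / (ph c M * ph (c-a-b) M) := by
  have hcM := hc M le_rfl
  rw [eq_div_iff (mul_ne_zero hcM hd), ← saal_poly M a b c, Finset.sum_mul]
  refine Finset.sum_congr rfl fun k hk => ?_
  have hkM : k ≤ M := Nat.lt_succ_iff.mp (Finset.mem_range.mp hk)
  have h1 : ph c M = ph c k * ph (c + k) (M-k) := by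
    rw [← ph_add]; congr 1; omega
  have h2 : ph (c-a-b) M = ph (c-a-b) (M-k) * ph (c-a-b + ((M-k:ℕ):ℂ)) k := by
    rw [← ph_add]; congr 1; omega
  have h3 : ph (1+a+b-c-(M:ℂ)) k = (-1)^k * ph (c-a-b + ((M-k:ℕ):ℂ)) k := by
    rw [ph_reflect (1+a+b-c-(M:ℂ)) k]
    congr 2
    push_cast [Nat.cast_sub hkM]; ring
  have h4 : ph (-(M:ℂ)) k = (-1)^k * ((k.factorial : ℂ) * (M.choose k : ℂ)) := by
    rw [ph_neg_nat M k hkM, Nat.descFactorial_eq_factorial_mul_choose]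
    push_cast; ring
  have hck := hc k hkM
  have hek := he k hkM
  have hrk : ph (c-a-b + ((M-k:ℕ):ℂ)) k ≠ 0 := by
    intro h0
    exact hek (by rw [h3, h0, mul_zero])
  have hfac : (k.factorial : ℂ) ≠ 0 := by exact_mod_cast k.factorial_ne_zero
  have hden : ph c k * ((-1:ℂ)^k * ph (c-a-b + ((M-k:ℕ):ℂ)) k) * (k.factorial : ℂ) ≠ 0 :=
    mul_ne_zero (mul_ne_zero hck (mul_ne_zero (pow_ne_zero _ (by norm_num)) hrk)) hfac
  rw [saalF, h4, h3, h1, h2, div_mul_eq_mul_div, div_eq_iff hden]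
  ring

/-- γ-sequence computation in Bailey's transform via Saalschütz's theorem. -/
theorem gamma_sequence_saalschuetz (N n : ℕ) (hn : n ≤ N) (f d₁ d₂ : ℂ)
    (h1 : ∀ r ≤ N, ph (1 + d₁ + d₂ - f - (N : ℂ)) r ≠ 0)
    (h2 : ∀ r : ℕ, ph f r ≠ 0)
    (h3 : ph f N ≠ 0) (h4 : ph (f - d₁ - d₂) N ≠ 0)
    (h5 : ph (f - d₁) n ≠ 0) (h6 : ph (f - d₂) n ≠ 0)
    (h7 : ph (f + (N : ℂ)) n ≠ 0) :
    ∑ r ∈ Finset.Icc n N,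
        (ph d₁ r * ph d₂ r * ph (-(N : ℂ)) r / ph (1 + d₁ + d₂ - f - (N : ℂ)) r) *
          (1 / ((r - n).factorial : ℂ)) * (1 / ph f (r + n)) =
      ph (f - d₁) N * ph (f - d₂) N / (ph f N * ph (f - d₁ - d₂) N) *
        ((-1 : ℂ) ^ n * ph d₁ n * ph d₂ n * ph (-(N : ℂ)) n /
          (ph (f - d₁) n * ph (f - d₂) n * ph (f + (N : ℂ)) n)) := by
  obtain ⟨M, rfl⟩ : ∃ M, N = n + M := ⟨N - n, by omega⟩
  set E : ℂ := 1 + d₁ + d₂ - f - ((n + M : ℕ) : ℂ) with hE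
  set a : ℂ := d₁ + (n : ℂ) with ha
  set b : ℂ := d₂ + (n : ℂ) with hb
  set c : ℂ := f + 2 * (n : ℂ) with hc
  -- nonvanishing facts
  have hEn : ph E n ≠ 0 := h1 n hn
  have hfnn : ph f (n + n) ≠ 0 := h2 (n + n)
  have hEnk : ∀ k, k ≤ M → ph (1 + a + b - c - (M : ℂ)) k ≠ 0 := by
    intro k hk
    have harg : 1 + a + b - c - (M : ℂ) = E + (n : ℂ) := by
      rw [hE, ha, hb, hc]; push_cast; ring
    rw [harg]
    have := h1 (n + k) (by omega)
    rw [ph_add E n k] at this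
    exact fun h0 => this (by rw [h0, mul_zero])
  have hck : ∀ k, k ≤ M → ph c k ≠ 0 := by
    intro k _
    have := h2 (n + n + k)
    rw [ph_add f (n + n) k] at this
    have harg : f + ((n + n : ℕ) : ℂ) = c := by rw [hc]; push_cast; ring
    rw [harg] at this
    exact fun h0 => this (by rw [h0, mul_zero])
  have hsplit4 : ph (f - d₁ - d₂) (n + M)
      = ph (f - d₁ - d₂) M * ph (f - d₁ - d₂ + (M : ℂ)) n := by
    rw [show n + M = M + n by omega, ph_add]
  have hdM : ph (c - a - b) M ≠ 0 := by
    have harg : c - a - b = f - d₁ - d₂ := by rw [hc, ha, hb]; push_cast; ring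
    rw [harg]
    rw [hsplit4] at h4
    exact fun h0 => h4 (by rw [h0, zero_mul])
  -- reindex the sum
  rw [show Finset.Icc n (n + M) = Finset.Ico n (n + M + 1) by rw [Finset.Ico_add_one_right_eq_Icc],
    Finset.sum_Ico_eq_sum_range, show n + M + 1 - n = M + 1 by omega]
  have hterm : ∀ i ∈ Finset.range (M + 1),
      (ph d₁ (n + i) * ph d₂ (n + i) * ph (-((n + M : ℕ) : ℂ)) (n + i) / ph E (n + i)) *
          (1 / ((n + i - n).factorial : ℂ)) * (1 / ph f (n + i + n)) =
      (ph d₁ n * ph d₂ n * ph (-((n + M : ℕ) : ℂ)) n / (ph E n * ph f (n + n))) *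
        (ph a i * ph b i * ph (-(M : ℂ)) i /
          (ph c i * ph (1 + a + b - c - (M : ℂ)) i * (i.factorial : ℂ))) := by
    intro i hi
    rw [show n + i - n = i by omega, show n + i + n = (n + n) + i by omega,
      ph_add f (n + n) i, ph_add d₁ n i, ph_add d₂ n i, ph_add (-((n + M : ℕ) : ℂ)) n i,
      ph_add E n i]
    have e1 : d₁ + (n : ℂ) = a := rfl
    have e2 : d₂ + (n : ℂ) = b := rfl
    have e3 : -((n + M : ℕ) : ℂ) + (n : ℂ) = -(M : ℂ) := by push_cast; ring
    have e4 : f + ((n + n : ℕ) : ℂ) = c := by rw [hc]; push_cast; ring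
    have e5 : 1 + a + b - c - (M : ℂ) = E + (n : ℂ) := by
      rw [hE, ha, hb, hc]; push_cast; ring
    rw [e1, e2, e3, e4, e5]
    ring
  rw [Finset.sum_congr rfl hterm, ← Finset.mul_sum,
    saal_div M a b c hck hEnk hdM]
  -- final algebraic assembly
  have g1 : ph (f - d₁) (n + M) = ph (f - d₁) n * ph (c - a) M := by
    rw [ph_add]; congr 1; rw [hc, ha]; push_cast; ring
  have g2 : ph (f - d₂) (n + M) = ph (f - d₂) n * ph (c - b) M := by
    rw [ph_add]; congr 1; rw [hc, hb]; push_cast; ring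
  have g3 : ph f (n + M) * ph (f + ((n + M : ℕ) : ℂ)) n = ph f (n + n) * ph c M := by
    have p1 : ph f ((n + M) + n) = ph f (n + M) * ph (f + ((n + M : ℕ) : ℂ)) n := ph_add f (n + M) n
    have p2 : ph f ((n + n) + M) = ph f (n + n) * ph (f + ((n + n : ℕ) : ℂ)) M := ph_add f (n + n) M
    have e4 : f + ((n + n : ℕ) : ℂ) = c := by rw [hc]; push_cast; ring
    rw [e4] at p2
    rw [← p1, ← p2]
    congr 1
    omega
  have g4 : ph (f - d₁ - d₂ + (M : ℂ)) n = (-1 : ℂ) ^ n * ph E n := by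
    rw [ph_reflect (f - d₁ - d₂ + (M : ℂ)) n]
    congr 2
    rw [hE]; push_cast; ring
  have g5 : c - a - b = f - d₁ - d₂ := by rw [hc, ha, hb]; push_cast; ring
  rw [hsplit4, g1, g2, g4, g5]
  have hphi : ph (f - d₁ - d₂) M ≠ 0 := by rw [← g5]; exact hdM
  have hcM : ph c M ≠ 0 := hck M le_rfl
  have hneg : ((-1 : ℂ)) ^ n ≠ 0 := pow_ne_zero _ (by norm_num)
  rw [div_mul_div_comm, div_mul_div_comm,
    div_eq_div_iff
      (mul_ne_zero (mul_ne_zero hEn hfnn) (mul_ne_zero hcM hphi))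
      (mul_ne_zero (mul_ne_zero h3 (mul_ne_zero hphi (mul_ne_zero hneg hEn)))
        (mul_ne_zero (mul_ne_zero h5 h6) h7))]
  linear_combination (ph d₁ n * ph d₂ n * ph (-((n + M : ℕ) : ℂ)) n * ph (c - a) M *
    ph (c - b) M * (-1 : ℂ) ^ n * ph E n * ph (f - d₁ - d₂) M * ph (f - d₁) n *
    ph (f - d₂) n) * g3
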